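/- arXiv:2312.03944 — 4 statements merged into one kernel-verified Lean document; each statement's English description precedes it below -/
import Mathlib

section
/- Let g be a real polynomial. Then the following are equivalent: (a) there exist an integer d ≥ deg(g) and real numbers α_0, α_1, …, α_d with α_0 = 0, α_d = 1 and 0 ≤ α_k ≤ 1 for all 1 ≤ k ≤ d−1, such that g(x) = Σ_{k=0}^d α_k · b_{k,d}(x); (b) g(0) = 0, g(1) = 1, and 0 < g(x) < 1 for all x ∈ (0,1). -/
/-!
A polynomial positive on `[0,1]` has nonnegative Bernstein coefficients in all large degrees:
its coefficient of index `k` in degree `e` differs from its value at `k/e` by `O(1/e)`.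
Under (b), `g = X^r q` with `q > 0` on `[0,1]`, and multiplying by `X^r` preserves
nonnegativity of Bernstein coefficients; the same applies to `1 - g` after the substitution
`x ↦ 1 - x`. So in one large degree `d` both `g` and `1 - g` have nonnegative coefficients;
by linear independence they add up to the coefficients of `1`, which are all `1`, so those of
`g` lie in `[0,1]`, and evaluating at `0` and `1` gives `α_0 = 0`, `α_d = 1`.
Conversely, Bernstein polynomials are positive on `(0,1)`, so there `g ≥ x^d > 0` and
`1 - g ≥ (1 - x)^d > 0`.
-/

open Polynomial Finset

theorem bernsteinPolynomial_nsmul_X_pow_mul {R : Type*} [CommRing R] (r e k : ℕ) :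
    (r + e).choose r • (X ^ r * bernsteinPolynomial R e k) =
      (r + k).choose r • bernsteinPolynomial R (r + e) (r + k) := by
  rcases le_or_gt k e with hk | hk
  · have hchoose : ((r + e).choose (r + k) : R[X]) * (r + k).choose r =
        (r + e).choose r * e.choose k := by
      have h := Nat.choose_mul (n := r + e) (s := r) (Nat.le_add_right r k)
      rw [Nat.add_sub_cancel_left, Nat.add_sub_cancel_left] at h
      simpa only [Nat.cast_mul] using congrArg (Nat.cast : ℕ → R[X]) h
    simp only [bernsteinPolynomial, Nat.add_sub_add_left, nsmul_eq_mul, pow_add]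
    linear_combination (-(X ^ r * X ^ k * (1 - X) ^ (e - k)) : R[X]) * hchoose
  · simp [bernsteinPolynomial.eq_zero_of_lt R hk,
      bernsteinPolynomial.eq_zero_of_lt R (Nat.add_lt_add_left hk r)]

theorem X_pow_mul_sum_smul_bernsteinPolynomial (r e : ℕ) (c : ℕ → ℝ) :
    X ^ r * ∑ k ∈ range (e + 1), c k • bernsteinPolynomial ℝ e k =
      ∑ j ∈ range (r + e + 1),
        ((j.choose r : ℝ) / (r + e).choose r * c (j - r)) • bernsteinPolynomial ℝ (r + e) j := by
  have hN : ((r + e).choose r : ℝ) ≠ 0 :=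
    Nat.cast_ne_zero.mpr (Nat.choose_pos (Nat.le_add_right r e)).ne'
  rw [add_assoc r e 1, sum_range_add _ r (e + 1), sum_eq_zero (s := range r) fun j hj => by
    simp [Nat.choose_eq_zero_of_lt (mem_range.mp hj)], zero_add, mul_sum]
  refine sum_congr rfl fun k _ => ?_
  have h := congrArg (((r + e).choose r : ℝ)⁻¹ • ·)
    (bernsteinPolynomial_nsmul_X_pow_mul (R := ℝ) r e k)
  simp only [← Nat.cast_smul_eq_nsmul ℝ, smul_smul, inv_mul_cancel₀ hN, one_smul] at h
  rw [Nat.add_sub_cancel_left, mul_smul_comm, h, smul_smul]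
  congr 1
  field_simp

theorem X_pow_eq_sum_smul_bernsteinPolynomial {i e : ℕ} (hi : i ≤ e) :
    (X ^ i : ℝ[X]) =
      ∑ k ∈ range (e + 1), ((k.choose i : ℝ) / e.choose i) • bernsteinPolynomial ℝ e k := by
  obtain ⟨m, rfl⟩ := Nat.exists_eq_add_of_le hi
  have h := X_pow_mul_sum_smul_bernsteinPolynomial i m 1
  simpa only [Pi.one_apply, mul_one, one_smul, bernsteinPolynomial.sum] using h

noncomputable def bernsteinCoeff (p : ℝ[X]) (e k : ℕ) : ℝ :=
  ∑ i ∈ range (p.natDegree + 1), p.coeff i * ((k.choose i : ℝ) / e.choose i)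

theorem sum_bernsteinCoeff_smul {p : ℝ[X]} {e : ℕ} (hp : p.natDegree ≤ e) :
    ∑ k ∈ range (e + 1), bernsteinCoeff p e k • bernsteinPolynomial ℝ e k = p := by
  conv_rhs => rw [p.as_sum_range' (p.natDegree + 1) (Nat.lt_succ_self _)]
  simp only [bernsteinCoeff, sum_smul, mul_smul]
  rw [sum_comm]
  refine sum_congr rfl fun i hi => ?_
  have hie : i ≤ e := (Nat.lt_succ_iff.mp (mem_range.mp hi)).trans hp
  rw [← smul_sum, ← X_pow_eq_sum_smul_bernsteinPolynomial hie, smul_eq_C_mul,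
    C_mul_X_pow_eq_monomial]

theorem Finset.norm_prod_sub_prod_le {ι R : Type*} [NormedCommRing R] [NormOneClass R]
    (s : Finset ι) {f g : ι → R} (hf : ∀ i ∈ s, ‖f i‖ ≤ 1) (hg : ∀ i ∈ s, ‖g i‖ ≤ 1) :
    ‖∏ i ∈ s, f i - ∏ i ∈ s, g i‖ ≤ ∑ i ∈ s, ‖f i - g i‖ := by
  classical
  induction s using Finset.induction_on with
  | empty => simp
  | insert a s ha ih =>
    simp only [forall_mem_insert] at hf hg
    have hprod : ‖∏ i ∈ s, g i‖ ≤ 1 :=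
      (norm_prod_le s g).trans (prod_le_one (fun _ _ => norm_nonneg _) hg.2)
    rw [prod_insert ha, prod_insert ha, sum_insert ha]
    calc ‖f a * ∏ i ∈ s, f i - g a * ∏ i ∈ s, g i‖
        = ‖f a * (∏ i ∈ s, f i - ∏ i ∈ s, g i) + (f a - g a) * ∏ i ∈ s, g i‖ := by ring_nf
      _ ≤ ‖f a‖ * ‖∏ i ∈ s, f i - ∏ i ∈ s, g i‖ + ‖f a - g a‖ * ‖∏ i ∈ s, g i‖ :=
        (norm_add_le _ _).trans (add_le_add (norm_mul_le _ _) (norm_mul_le _ _))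
      _ ≤ 1 * ∑ i ∈ s, ‖f i - g i‖ + ‖f a - g a‖ * 1 := by
        gcongr
        exacts [hf.1, ih hf.2 hg.2]
      _ = ‖f a - g a‖ + ∑ i ∈ s, ‖f i - g i‖ := by ring

theorem abs_cast_sub_div_cast_sub_sub_div_le {n e k j : ℕ} (hjn : j ≤ n) (hne : n < e)
    (hke : k ≤ e) :
    |((k - j : ℕ) : ℝ) / (e - j : ℕ) - k / e| ≤ n / (e - n) := by
  have hne' : (n : ℝ) < e := by exact_mod_cast hne
  have hjn' : (j : ℝ) ≤ n := by exact_mod_cast hjn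
  have hke' : (k : ℝ) ≤ e := by exact_mod_cast hke
  have hen : (0 : ℝ) < e - n := by linarith
  rcases le_or_gt j k with hjk | hkj
  · have hjk' : (j : ℝ) ≤ k := by exact_mod_cast hjk
    rw [Nat.cast_sub hjk, Nat.cast_sub (hjn.trans hne.le)]
    have hej : (0 : ℝ) < e - j := by linarith
    have he : (e : ℝ) ≠ 0 := by linarith
    calc |((k : ℝ) - j) / (e - j) - k / e| = j / (e - j) * ((e - k) / e) := by
          rw [abs_of_nonpos]
          · field_simp; ring
          · rw [sub_nonpos, div_le_div_iff₀ hej (by linarith)]; nlinarith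
      _ ≤ j / (e - j) * 1 := by
          gcongr
          rw [div_le_one (by linarith)]; linarith [Nat.cast_nonneg (α := ℝ) k]
      _ ≤ n / (e - n) := by rw [mul_one]; gcongr
  · have hkn : (k : ℝ) ≤ n := by exact_mod_cast (hkj.trans_le hjn).le
    rw [Nat.sub_eq_zero_of_le hkj.le, Nat.cast_zero, zero_div, zero_sub, abs_neg,
      abs_of_nonneg (by positivity)]
    calc (k : ℝ) / e ≤ n / e := by gcongr
      _ ≤ n / (e - n) := by gcongr; linarith [Nat.cast_nonneg (α := ℝ) n]

theorem choose_div_choose_eq_prod (k e i : ℕ) :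
    (k.choose i : ℝ) / e.choose i = ∏ j ∈ range i, ((k - j : ℕ) : ℝ) / (e - j : ℕ) := by
  rw [prod_div_distrib, ← Nat.cast_prod, ← Nat.cast_prod, ← Nat.descFactorial_eq_prod_range,
    ← Nat.descFactorial_eq_prod_range, Nat.descFactorial_eq_factorial_mul_choose,
    Nat.descFactorial_eq_factorial_mul_choose, Nat.cast_mul, Nat.cast_mul,
    mul_div_mul_left _ _ (Nat.cast_ne_zero.mpr i.factorial_ne_zero)]

theorem abs_choose_div_choose_sub_pow_le {n e k i : ℕ} (hin : i ≤ n) (hne : n < e) (hke : k ≤ e) :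
    |(k.choose i : ℝ) / e.choose i - ((k : ℝ) / e) ^ i| ≤ n ^ 2 / (e - n) := by
  have hen : (0 : ℝ) < e - n := sub_pos.mpr (by exact_mod_cast hne)
  have hunit {a b : ℕ} (hab : a ≤ b) : ‖(a : ℝ) / b‖ ≤ 1 := by
    rw [Real.norm_eq_abs, abs_of_nonneg (by positivity)]
    exact div_le_one_of_le₀ (by exact_mod_cast hab) (Nat.cast_nonneg b)
  have hfactor : ∀ j ∈ range i,
      ‖((k - j : ℕ) : ℝ) / (e - j : ℕ) - k / e‖ ≤ n / (e - n) := fun j hj =>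
    abs_cast_sub_div_cast_sub_sub_div_le ((mem_range.mp hj).le.trans hin) hne hke
  have hpow : ((k : ℝ) / e) ^ i = ∏ _j ∈ range i, (k : ℝ) / e := by rw [prod_const, card_range]
  rw [choose_div_choose_eq_prod, hpow, ← Real.norm_eq_abs]
  calc _ ≤ ∑ j ∈ range i, ‖((k - j : ℕ) : ℝ) / (e - j : ℕ) - k / e‖ :=
        norm_prod_sub_prod_le _ (fun j _ => hunit (Nat.sub_le_sub_right hke j)) fun _ _ => hunit hke
    _ ≤ ∑ j ∈ range i, (n : ℝ) / (e - n) := sum_le_sum hfactor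
    _ ≤ n ^ 2 / (e - n) := by
        rw [sum_const, card_range, nsmul_eq_mul, sq, mul_div_assoc]
        gcongr

theorem abs_bernsteinCoeff_sub_eval_le (p : ℝ[X]) {e k : ℕ} (hne : p.natDegree < e) (hke : k ≤ e) :
    |bernsteinCoeff p e k - p.eval ((k : ℝ) / e)| ≤
      (∑ i ∈ range (p.natDegree + 1), |p.coeff i|) * (p.natDegree ^ 2 / (e - p.natDegree)) := by
  rw [eval_eq_sum_range, bernsteinCoeff, ← sum_sub_distrib, sum_mul]
  refine (abs_sum_le_sum_abs _ _).trans (sum_le_sum fun i hi => ?_)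
  rw [← mul_sub, abs_mul]
  gcongr
  exact abs_choose_div_choose_sub_pow_le (Nat.lt_succ_iff.mp (mem_range.mp hi)) hne hke

def HasNonnegBernsteinExpansion (d : ℕ) (p : ℝ[X]) : Prop :=
  ∃ c : ℕ → ℝ, (∀ k ≤ d, 0 ≤ c k) ∧ ∑ k ∈ range (d + 1), c k • bernsteinPolynomial ℝ d k = p

theorem eventually_hasNonnegBernsteinExpansion_of_pos {p : ℝ[X]}
    (hp : ∀ x ∈ Set.Icc (0 : ℝ) 1, 0 < p.eval x) :
    ∀ᶠ e in Filter.atTop, HasNonnegBernsteinExpansion e p := by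
  obtain ⟨x₀, hx₀, hmin⟩ := isCompact_Icc.exists_isMinOn (Set.nonempty_Icc.mpr zero_le_one)
    (p.continuous.continuousOn (s := Set.Icc (0 : ℝ) 1))
  have herror : Filter.Tendsto (fun e : ℕ => (∑ i ∈ range (p.natDegree + 1), |p.coeff i|) *
      (p.natDegree ^ 2 / ((e : ℝ) - p.natDegree))) Filter.atTop (nhds 0) := by
    simpa [sub_eq_add_neg] using tendsto_const_nhds.mul (tendsto_const_nhds.div_atTop
      (Filter.tendsto_atTop_add_const_right _ _ (tendsto_natCast_atTop_atTop (R := ℝ))))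
  filter_upwards [Filter.eventually_gt_atTop p.natDegree,
    herror.eventually (gt_mem_nhds (hp x₀ hx₀))] with e hne hsmall
  refine ⟨bernsteinCoeff p e, fun k hke => ?_, sum_bernsteinCoeff_smul hne.le⟩
  have hk : (k : ℝ) / e ∈ Set.Icc (0 : ℝ) 1 :=
    ⟨by positivity, div_le_one_of_le₀ (by exact_mod_cast hke) (Nat.cast_nonneg e)⟩
  have hmin_le : p.eval x₀ ≤ p.eval ((k : ℝ) / e) := hmin hk
  linarith [(abs_le.mp (abs_bernsteinCoeff_sub_eval_le p hne hke)).1]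

namespace HasNonnegBernsteinExpansion

theorem X_pow_mul {e : ℕ} {p : ℝ[X]} (hp : HasNonnegBernsteinExpansion e p) (r : ℕ) :
    HasNonnegBernsteinExpansion (r + e) (X ^ r * p) := by
  obtain ⟨c, hc, rfl⟩ := hp
  refine ⟨_, fun j hj => ?_, (X_pow_mul_sum_smul_bernsteinPolynomial r e c).symm⟩
  exact mul_nonneg (by positivity) (hc _ (by omega))

theorem comp_one_sub_X {d : ℕ} {p : ℝ[X]} (hp : HasNonnegBernsteinExpansion d p) :
    HasNonnegBernsteinExpansion d (p.comp (1 - X)) := by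
  obtain ⟨c, hc, rfl⟩ := hp
  refine ⟨fun k => c (d - k), fun k _ => hc _ (Nat.sub_le d k), ?_⟩
  rw [Polynomial.sum_comp, ← sum_range_reflect]
  refine sum_congr rfl fun k hk => ?_
  have hkd := Nat.lt_succ_iff.mp (mem_range.mp hk)
  rw [smul_comp, bernsteinPolynomial.flip _ _ _ hkd, Nat.add_sub_cancel]
  dsimp only
  rw [Nat.sub_sub_self hkd]

end HasNonnegBernsteinExpansion

theorem exists_eq_X_pow_mul_of_pos_on_Ioc {p : ℝ[X]} (hp : ∀ x ∈ Set.Ioc (0 : ℝ) 1, 0 < p.eval x) :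
    ∃ r q, p = X ^ r * q ∧ ∀ x ∈ Set.Icc (0 : ℝ) 1, 0 < q.eval x := by
  have hp0 : p ≠ 0 := by
    rintro rfl
    simpa using hp 1 ⟨one_pos, le_rfl⟩
  obtain ⟨q, hpq, hq⟩ := p.exists_eq_pow_rootMultiplicity_mul_and_not_dvd hp0 0
  rw [map_zero, sub_zero] at hpq hq
  have hq0 : q.eval 0 ≠ 0 := fun h => hq (X_dvd_iff.mpr (by rwa [coeff_zero_eq_eval_zero]))
  have hqpos : ∀ x ∈ Set.Ioc (0 : ℝ) 1, 0 < q.eval x := fun x hx => by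
    have := hp x hx
    rw [hpq, eval_mul, eval_pow, eval_X] at this
    exact pos_of_mul_pos_right this (pow_nonneg hx.1.le _)
  refine ⟨_, q, hpq, fun x hx => hx.1.eq_or_lt.elim (fun h => ?_) fun h => hqpos x ⟨h, hx.2⟩⟩
  subst h
  have hlim := (q.continuous.tendsto 0).mono_left (nhdsWithin_le_nhds (s := Set.Ioi 0))
  refine hq0.lt_of_le' (ge_of_tendsto hlim ?_)
  filter_upwards [Ioo_mem_nhdsGT one_pos] with x hx using (hqpos x ⟨hx.1, hx.2.le⟩).le

theorem eventually_hasNonnegBernsteinExpansion_of_pos_on_Ioc {p : ℝ[X]}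
    (hp : ∀ x ∈ Set.Ioc (0 : ℝ) 1, 0 < p.eval x) :
    ∀ᶠ d in Filter.atTop, HasNonnegBernsteinExpansion d p := by
  obtain ⟨r, q, rfl, hq⟩ := exists_eq_X_pow_mul_of_pos_on_Ioc hp
  filter_upwards [Filter.eventually_ge_atTop r,
    (Filter.tendsto_sub_atTop_nat r).eventually (eventually_hasNonnegBernsteinExpansion_of_pos hq)]
    with d hrd hd
  simpa [Nat.add_sub_cancel' hrd] using hd.X_pow_mul r

theorem eq_zero_of_sum_smul_bernsteinPolynomial_eq_zero {R : Type*} [CommRing R] [IsDomain R]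
    [CharZero R] {d : ℕ} {c : ℕ → R}
    (h : ∑ k ∈ range (d + 1), c k • bernsteinPolynomial R d k = 0) {k : ℕ} (hk : k ≤ d) :
    c k = 0 := by
  induction k using Nat.strong_induction_on with
  | _ k ih =>
    -- the `k`-th derivative at `0` sees only the Bernstein polynomials of index `≤ k`
    have hderiv := congrArg (fun p : R[X] => (derivative^[k] p).eval 0) h
    simp only [iterate_derivative_sum, iterate_derivative_smul, eval_finsetSum, eval_smul,
      smul_eq_mul, iterate_map_zero, eval_zero] at hderiv
    rw [sum_eq_single k (fun j _ hjk => ?_) (fun hk' => absurd (mem_range.mpr (by omega)) hk')]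
      at hderiv
    · exact (mul_eq_zero.mp hderiv).resolve_right
        (bernsteinPolynomial.iterate_derivative_at_0_ne_zero R d k hk)
    · rcases hjk.lt_or_gt with hj | hj
      · rw [ih j hj (by omega), zero_mul]
      · rw [bernsteinPolynomial.iterate_derivative_at_0_eq_zero_of_lt R d hj, mul_zero]

theorem eval_zero_sum_smul_bernsteinPolynomial {R : Type*} [CommRing R] (d : ℕ) (c : ℕ → R) :
    (∑ k ∈ range (d + 1), c k • bernsteinPolynomial R d k).eval 0 = c 0 := by
  simp [eval_finsetSum, bernsteinPolynomial.eval_at_0]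

theorem eval_one_sum_smul_bernsteinPolynomial {R : Type*} [CommRing R] (d : ℕ) (c : ℕ → R) :
    (∑ k ∈ range (d + 1), c k • bernsteinPolynomial R d k).eval 1 = c d := by
  simp [eval_finsetSum, bernsteinPolynomial.eval_at_1]

theorem eval_sum_smul_bernsteinPolynomial_pos {d j : ℕ} {c : ℕ → ℝ} (hc : ∀ k ≤ d, 0 ≤ c k)
    (hj : j ≤ d) (hcj : 0 < c j) {x : ℝ} (hx : x ∈ Set.Ioo (0 : ℝ) 1) :
    0 < (∑ k ∈ range (d + 1), c k • bernsteinPolynomial ℝ d k).eval x := by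
  have hb : ∀ k ≤ d, 0 < (bernsteinPolynomial ℝ d k).eval x := fun k hk => by
    have hchoose := Nat.choose_pos hk
    have hx0 := hx.1
    have hx1 : 0 < 1 - x := sub_pos.mpr hx.2
    simp only [bernsteinPolynomial, eval_mul, eval_natCast, eval_pow, eval_X, eval_sub, eval_one]
    positivity
  rw [eval_finsetSum]
  refine sum_pos' (fun k hk => ?_) ⟨j, mem_range.mpr (by omega), ?_⟩
  · have hk' := Nat.lt_succ_iff.mp (mem_range.mp hk)
    simpa only [eval_smul, smul_eq_mul] using mul_nonneg (hc k hk') (hb k hk').le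
  · simpa only [eval_smul, smul_eq_mul] using mul_pos hcj (hb j hj)

theorem eval_sum_smul_bernsteinPolynomial_mem_Ioo {d : ℕ} {c : ℕ → ℝ}
    (hc : ∀ k ≤ d, c k ∈ Set.Icc (0 : ℝ) 1) (hc0 : c 0 < 1) (hcd : 0 < c d) {x : ℝ}
    (hx : x ∈ Set.Ioo (0 : ℝ) 1) :
    (∑ k ∈ range (d + 1), c k • bernsteinPolynomial ℝ d k).eval x ∈ Set.Ioo (0 : ℝ) 1 := by
  have hsub : 1 - ∑ k ∈ range (d + 1), c k • bernsteinPolynomial ℝ d k =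
      ∑ k ∈ range (d + 1), (1 - c k) • bernsteinPolynomial ℝ d k := by
    simp only [sub_smul, one_smul, sum_sub_distrib, bernsteinPolynomial.sum]
  have hupper := eval_sum_smul_bernsteinPolynomial_pos (c := fun k => 1 - c k)
    (fun k hk => sub_nonneg.mpr (hc k hk).2) (Nat.zero_le d) (sub_pos.mpr hc0) hx
  rw [← hsub, eval_sub, eval_one] at hupper
  exact ⟨eval_sum_smul_bernsteinPolynomial_pos (fun k hk => (hc k hk).1) le_rfl hcd hx,
    sub_pos.mp hupper⟩

theorem eventually_exists_bernsteinExpansion_mem_Icc {g : ℝ[X]}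
    (hg₀ : ∀ x ∈ Set.Ioc (0 : ℝ) 1, 0 < g.eval x) (hg₁ : ∀ x ∈ Set.Ico (0 : ℝ) 1, g.eval x < 1) :
    ∀ᶠ d in Filter.atTop, ∃ c : ℕ → ℝ, (∀ k ≤ d, c k ∈ Set.Icc (0 : ℝ) 1) ∧
      ∑ k ∈ range (d + 1), c k • bernsteinPolynomial ℝ d k = g := by
  have hg₁' : ∀ x ∈ Set.Ioc (0 : ℝ) 1, 0 < ((1 - g).comp (1 - X)).eval x := fun x hx => by
    simp only [eval_comp, eval_sub, eval_one, eval_X, sub_pos]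
    exact hg₁ (1 - x) ⟨by linarith [hx.2], by linarith [hx.1]⟩
  filter_upwards [eventually_hasNonnegBernsteinExpansion_of_pos_on_Ioc hg₀,
    (eventually_hasNonnegBernsteinExpansion_of_pos_on_Ioc hg₁').mono fun d hd => by
      simpa [comp_assoc] using hd.comp_one_sub_X] with d ⟨c, hc, hgc⟩ ⟨c', hc', hgc'⟩
  refine ⟨c, fun k hk => ⟨hc k hk, ?_⟩, hgc⟩
  -- the expansions of `g` and `1 - g` add up to the expansion of `1`, whose coefficients are `1`
  have hsum := eq_zero_of_sum_smul_bernsteinPolynomial_eq_zero (c := fun k => c k + c' k - 1)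
    (by simp only [sub_smul, add_smul, one_smul, sum_sub_distrib, sum_add_distrib, hgc, hgc',
      bernsteinPolynomial.sum, add_sub_cancel, sub_self]) hk
  linarith [hc' k hk]

theorem random_outcome_representation (g : Polynomial ℝ) :
    (∃ d : ℕ, g.natDegree ≤ d ∧ ∃ α : ℕ → ℝ,
      α 0 = 0 ∧ α d = 1 ∧ (∀ k, 1 ≤ k → k ≤ d - 1 → 0 ≤ α k ∧ α k ≤ 1) ∧
      g = ∑ k ∈ Finset.range (d + 1), Polynomial.C (α k) * bernsteinPolynomial ℝ d k)
    ↔ (g.eval 0 = 0 ∧ g.eval 1 = 1 ∧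
        ∀ x ∈ Set.Ioo (0 : ℝ) 1, 0 < g.eval x ∧ g.eval x < 1) := by
  simp_rw [← smul_eq_C_mul]
  constructor
  · rintro ⟨d, -, α, hα0, hαd, hα, rfl⟩
    have hα_mem : ∀ k ≤ d, α k ∈ Set.Icc (0 : ℝ) 1 := fun k hk => by
      rcases Nat.eq_zero_or_pos k with rfl | hk0
      · simp [hα0]
      rcases hk.eq_or_lt with rfl | hkd
      · simp [hαd]
      exact hα k hk0 (by omega)
    exact ⟨by rw [eval_zero_sum_smul_bernsteinPolynomial, hα0],
      by rw [eval_one_sum_smul_bernsteinPolynomial, hαd], fun x hx =>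
        eval_sum_smul_bernsteinPolynomial_mem_Ioo hα_mem (by simp [hα0]) (by simp [hαd]) hx⟩
  · rintro ⟨h0, h1, hmid⟩
    obtain ⟨d, hd, α, hα, rfl⟩ := ((Filter.eventually_ge_atTop g.natDegree).and
      (eventually_exists_bernsteinExpansion_mem_Icc
        (fun x hx => hx.2.eq_or_lt.elim (fun h => by simp [h, h1]) fun h => (hmid x ⟨hx.1, h⟩).1)
        (fun x hx => hx.1.eq_or_lt.elim (fun h => by simp [← h, h0])
          fun h => (hmid x ⟨h, hx.2⟩).2))).exists
    refine ⟨d, hd, α, ?_, ?_, fun k _ _ => hα k (by omega), rfl⟩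
    · rwa [eval_zero_sum_smul_bernsteinPolynomial] at h0
    · rwa [eval_one_sum_smul_bernsteinPolynomial] at h1
end

section
/- For all integers 1 ≤ k ≤ d and all real numbers α_1 ≤ α_2 in [0,1], the following polynomial identity holds for all real x: B_{k,d}((α_2−α_1)x + α_1) = Σ_{l=0}^{k−1} Σ_{m=k−l}^{d−l} [d!/(l! · m! · (d−m−l)!)] · α_1^l · (α_2−α_1)^m · (1−α_2)^{d−m−l} · B_{k−l,m}(x) + B_{k,d}(α_1). -/
/-- The Bernstein polynomial `b_{k,d}(x) = (d choose k) x^k (1-x)^(d-k)`, as a real function. -/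
noncomputable def bern (d k : ℕ) (x : ℝ) : ℝ :=
  (d.choose k : ℝ) * x ^ k * (1 - x) ^ (d - k)

/-- `B_{k,d}(x) = ∑_{l=k}^d b_{l,d}(x)`. -/
noncomputable def Bsum (d k : ℕ) (x : ℝ) : ℝ :=
  ∑ l ∈ Finset.Icc k d, bern d l x

/-- The coefficient appearing in the rescaling identity. -/
noncomputable def cf (d l m : ℕ) (α₁ α₂ : ℝ) : ℝ :=
  (Nat.factorial d : ℝ) / (Nat.factorial l * Nat.factorial m * Nat.factorial (d - m - l)) *
    α₁ ^ l * (α₂ - α₁) ^ m * (1 - α₂) ^ (d - m - l)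

lemma fact_ne (n : ℕ) : (n.factorial : ℝ) ≠ 0 := by
  exact_mod_cast n.factorial_ne_zero

lemma choose_fact_real (l a e c : ℕ) :
    (((l+a+e+c).choose (l+a) : ℝ)) * ((l+a).choose l : ℝ) * ((e+c).choose c : ℝ) =
    ((l+a+e+c).factorial : ℝ) / ((l.factorial : ℝ) * (a+e).factorial * c.factorial)
      * ((a+e).choose a : ℝ) := by
  rw [Nat.cast_choose ℝ (show l+a ≤ l+a+e+c by omega),
      Nat.cast_choose ℝ (show l ≤ l+a by omega),
      Nat.cast_choose ℝ (show c ≤ e+c by omega),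
      Nat.cast_choose ℝ (show a ≤ a+e by omega),
      show l+a+e+c - (l+a) = e+c by omega, show l+a-l = a by omega,
      show e+c-c = e by omega, show a+e-a = e by omega]
  have h1 := fact_ne l; have h2 := fact_ne a; have h3 := fact_ne e
  have h4 := fact_ne c; have h5 := fact_ne (l+a); have h6 := fact_ne (e+c)
  have h7 := fact_ne (a+e)
  field_simp

lemma bern_sum_one (m : ℕ) (x : ℝ) : ∑ i ∈ Finset.range (m+1), bern m i x = 1 := by
  have h := add_pow x (1-x) m
  rw [show x + (1-x) = (1:ℝ) by ring, one_pow] at h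
  rw [h]
  exact Finset.sum_congr rfl fun i _ => by unfold bern; ring

lemma term_eq (l a e c : ℕ) (α₁ α₂ x : ℝ) :
    ((l+a+e+c).choose (l+a) : ℝ) * (α₁^l * ((α₂-α₁)*x)^a * ((l+a).choose l : ℝ))
      * ((1-α₂)^c * ((α₂-α₁)*(1-x))^e * ((e+c).choose c : ℝ))
    = ((l+a+e+c).factorial : ℝ)/(l.factorial * (a+e).factorial * c.factorial)
        * α₁^l * (α₂-α₁)^(a+e) * (1-α₂)^c * bern (a+e) a x := by
  unfold bern
  rw [show a+e-a = e by omega, mul_pow (α₂-α₁) x a, mul_pow (α₂-α₁) (1-x) e]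
  linear_combination (α₁^l * (α₂-α₁)^a * x^a * (1-α₂)^c * (α₂-α₁)^e * (1-x)^e)
    * choose_fact_real l a e c

lemma bern_expand (d j : ℕ) (hj : j ≤ d) (α₁ α₂ x : ℝ) :
    bern d j ((α₂-α₁)*x+α₁) =
      ∑ l ∈ Finset.range (j+1), ∑ m ∈ Finset.Icc (j-l) (d-l),
        cf d l m α₁ α₂ * bern m (j-l) x := by
  unfold cf
  obtain ⟨n, rfl⟩ := Nat.exists_eq_add_of_le hj
  have hb : bern (j+n) j ((α₂-α₁)*x+α₁)
      = ((j+n).choose j : ℝ) * ((α₁ + (α₂-α₁)*x)^j * ((1-α₂) + (α₂-α₁)*(1-x))^n) := by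
    unfold bern
    rw [show j+n-j = n by omega, show (α₂-α₁)*x+α₁ = α₁+(α₂-α₁)*x from by ring,
        show (1:ℝ) - (α₁+(α₂-α₁)*x) = (1-α₂)+(α₂-α₁)*(1-x) from by ring, mul_assoc]
  rw [hb, add_pow, add_pow, Finset.sum_mul_sum, Finset.mul_sum]
  refine Finset.sum_congr rfl fun l hl => ?_
  rw [Finset.mul_sum]
  have hl' : l ≤ j := Nat.lt_succ_iff.mp (Finset.mem_range.mp hl)
  obtain ⟨a, rfl⟩ := Nat.exists_eq_add_of_le hl'
  rw [show l+a-l = a by omega, show l+a+n-l = a+n by omega]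
  refine Finset.sum_nbij' (fun c => a + (n - c)) (fun m => n - (m - a)) ?_ ?_ ?_ ?_ ?_
  · intro c hc; simp only [Finset.mem_range, Finset.mem_Icc] at *; omega
  · intro m hm; simp only [Finset.mem_range, Finset.mem_Icc] at *; omega
  · intro c hc; simp only [Finset.mem_range] at hc; omega
  · intro m hm; simp only [Finset.mem_Icc] at hm; omega
  · intro c hc
    simp only [Finset.mem_range] at hc
    obtain ⟨e, rfl⟩ := Nat.exists_eq_add_of_le (Nat.lt_succ_iff.mp hc)
    rw [show c+e-c = e by omega,
        show l+a+(c+e) = l+a+e+c by omega, show l+a+e+c-(a+e)-l = c by omega,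
        show (c+e).choose c = (e+c).choose c from by rw [Nat.add_comm c e]]
    linear_combination term_eq l a e c α₁ α₂ x

lemma coeff_sum (l n : ℕ) (α₁ α₂ : ℝ) :
    ∑ m ∈ Finset.range (n+1),
      ((l+n).factorial : ℝ)/(l.factorial * m.factorial * ((l+n)-m-l).factorial)
        * α₁^l * (α₂-α₁)^m * (1-α₂)^((l+n)-m-l)
      = bern (l+n) l α₁ := by
  unfold bern
  rw [show l+n-l = n by omega]
  have h := add_pow (α₂-α₁) (1-α₂) n
  rw [show (α₂-α₁) + (1-α₂) = 1-α₁ by ring] at h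
  rw [h, Finset.mul_sum]
  refine Finset.sum_congr rfl fun m hm => ?_
  have hmn : m ≤ n := Nat.lt_succ_iff.mp (Finset.mem_range.mp hm)
  rw [show l+n-m-l = n-m by omega, Nat.cast_choose ℝ (show l ≤ l+n by omega),
      Nat.cast_choose ℝ hmn, show l+n-l = n by omega]
  have h1 := fact_ne l; have h2 := fact_ne m; have h3 := fact_ne n
  have h4 := fact_ne (n-m)
  field_simp

lemma coeff_sum' (d l : ℕ) (hl : l ≤ d) (α₁ α₂ : ℝ) :
    ∑ m ∈ Finset.range (d-l+1), cf d l m α₁ α₂ = bern d l α₁ := by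
  unfold cf
  have h := coeff_sum l (d-l) α₁ α₂
  rw [show l + (d-l) = d by omega] at h
  exact h

/-- Rescaling identity for the tail sums `B_{k,d}` of Bernstein polynomials. -/
theorem Bsum_affine_rescale (d k : ℕ) (hk1 : 1 ≤ k) (hkd : k ≤ d)
    (α₁ α₂ : ℝ) (h0 : 0 ≤ α₁) (h12 : α₁ ≤ α₂) (h21 : α₂ ≤ 1) (x : ℝ) :
    Bsum d k ((α₂ - α₁) * x + α₁) =
      (∑ l ∈ Finset.range k, ∑ m ∈ Finset.Icc (k - l) (d - l),
        ((Nat.factorial d : ℝ) /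
            (Nat.factorial l * Nat.factorial m * Nat.factorial (d - m - l))) *
          α₁ ^ l * (α₂ - α₁) ^ m * (1 - α₂) ^ (d - m - l) * Bsum m (k - l) x)
      + Bsum d k α₁ := by
  show Bsum d k ((α₂ - α₁) * x + α₁) =
      (∑ l ∈ Finset.range k, ∑ m ∈ Finset.Icc (k - l) (d - l),
        cf d l m α₁ α₂ * Bsum m (k - l) x) + Bsum d k α₁
  have hL : Bsum d k ((α₂ - α₁) * x + α₁)
      = ∑ p ∈ (Finset.Icc k d).sigma
            (fun j => (Finset.range (j+1)).sigma (fun l => Finset.Icc (j-l) (d-l))),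
          cf d p.2.1 p.2.2 α₁ α₂ * bern p.2.2 (p.1 - p.2.1) x :=
    calc Bsum d k ((α₂ - α₁) * x + α₁)
        = ∑ j ∈ Finset.Icc k d, ∑ l ∈ Finset.range (j+1), ∑ m ∈ Finset.Icc (j-l) (d-l),
            cf d l m α₁ α₂ * bern m (j-l) x :=
          Finset.sum_congr rfl fun j hj => bern_expand d j (Finset.mem_Icc.mp hj).2 α₁ α₂ x
      _ = ∑ j ∈ Finset.Icc k d, ∑ q ∈ (Finset.range (j+1)).sigma (fun l => Finset.Icc (j-l) (d-l)),
            cf d q.1 q.2 α₁ α₂ * bern q.2 (j - q.1) x :=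
          Finset.sum_congr rfl fun j _ => Finset.sum_sigma' _ _ _
      _ = _ := Finset.sum_sigma' _ _ _
  have hR1 : (∑ l ∈ Finset.range k, ∑ m ∈ Finset.Icc (k - l) (d - l),
        cf d l m α₁ α₂ * Bsum m (k - l) x)
      = ∑ p ∈ (Finset.range k).sigma
            (fun l => (Finset.Icc (k-l) (d-l)).sigma (fun m => Finset.Icc (k-l) m)),
          cf d p.1 p.2.1 α₁ α₂ * bern p.2.1 p.2.2 x :=
    calc (∑ l ∈ Finset.range k, ∑ m ∈ Finset.Icc (k - l) (d - l),
            cf d l m α₁ α₂ * Bsum m (k - l) x)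
        = ∑ l ∈ Finset.range k, ∑ m ∈ Finset.Icc (k - l) (d - l),
            ∑ i ∈ Finset.Icc (k-l) m, cf d l m α₁ α₂ * bern m i x := by
          refine Finset.sum_congr rfl fun l _ => Finset.sum_congr rfl fun m _ => ?_
          rw [show Bsum m (k-l) x = ∑ i ∈ Finset.Icc (k-l) m, bern m i x from rfl,
              Finset.mul_sum]
      _ = ∑ l ∈ Finset.range k,
            ∑ q ∈ (Finset.Icc (k-l) (d-l)).sigma (fun m => Finset.Icc (k-l) m),
              cf d l q.1 α₁ α₂ * bern q.1 q.2 x :=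
          Finset.sum_congr rfl fun l _ => Finset.sum_sigma' _ _ _
      _ = _ := Finset.sum_sigma' _ _ _
  have hR2 : Bsum d k α₁
      = ∑ p ∈ (Finset.Icc k d).sigma
            (fun l => (Finset.range (d-l+1)).sigma (fun m => Finset.range (m+1))),
          cf d p.1 p.2.1 α₁ α₂ * bern p.2.1 p.2.2 x :=
    calc Bsum d k α₁
        = ∑ l ∈ Finset.Icc k d, ∑ m ∈ Finset.range (d-l+1),
            ∑ i ∈ Finset.range (m+1), cf d l m α₁ α₂ * bern m i x := by
          refine Finset.sum_congr rfl fun l hl => ?_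
          rw [← coeff_sum' d l (Finset.mem_Icc.mp hl).2 α₁ α₂]
          refine Finset.sum_congr rfl fun m _ => ?_
          rw [← Finset.mul_sum, bern_sum_one, mul_one]
      _ = ∑ l ∈ Finset.Icc k d,
            ∑ q ∈ (Finset.range (d-l+1)).sigma (fun m => Finset.range (m+1)),
              cf d l q.1 α₁ α₂ * bern q.1 q.2 x :=
          Finset.sum_congr rfl fun l _ => Finset.sum_sigma' _ _ _
      _ = _ := Finset.sum_sigma' _ _ _
  rw [hL, hR1, hR2, ← Finset.sum_union]
  · refine Finset.sum_nbij' (fun p => ⟨p.2.1, p.2.2, p.1 - p.2.1⟩)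
      (fun q => ⟨q.1 + q.2.2, q.1, q.2.1⟩) ?_ ?_ ?_ ?_ ?_
    · rintro ⟨j, l, m⟩ hp
      simp only [Finset.mem_sigma, Finset.mem_Icc, Finset.mem_range,
        Finset.mem_union] at hp ⊢
      omega
    · rintro ⟨l, m, i⟩ hq
      simp only [Finset.mem_sigma, Finset.mem_Icc, Finset.mem_range,
        Finset.mem_union] at hq ⊢
      omega
    · rintro ⟨j, l, m⟩ hp
      simp only [Finset.mem_sigma, Finset.mem_Icc, Finset.mem_range] at hp
      dsimp only
      rw [show l + (j - l) = j by omega]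
    · rintro ⟨l, m, i⟩ hq
      dsimp only
      rw [show (l + i) - l = i by omega]
    · rintro ⟨j, l, m⟩ hp
      rfl
  · rw [Finset.disjoint_left]
    rintro ⟨l, m, i⟩ h1 h2
    simp only [Finset.mem_sigma, Finset.mem_Icc, Finset.mem_range] at h1 h2
    omega
end

section
/- If φ is a traveling wave with speed ℓ, then ℓ lies in the open interval (min supp(q), max supp(q)), where min supp(q) and max supp(q) are the infimum and supremum of the support of q. -/
open MeasureTheory Filter Topology

/-- Convolution `(q * u)(x) = ∫ q(y) u(x - y) dy`. -/
noncomputable def conv (q u : ℝ → ℝ) (x : ℝ) : ℝ := ∫ y : ℝ, q y * u (x - y)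

/-- The shifted kernel `q_ℓ(x) = q(x + ℓ)`. -/
def qshift (q : ℝ → ℝ) (ℓ : ℝ) (x : ℝ) : ℝ := q (x + ℓ)

/-- The bistable setting: a `C¹` compactly supported probability density `q`, and a
polynomial `P` (the recursion polynomial, i.e. `g` on `[0,1]`) with `P(0) = 0`, `P(1) = 1`,
`0 < P < 1` and `P' > 0` on `(0,1)`; the nonlinearity `f(x) = P(x) - x` has a unique zero
`θ ∈ (0,1)` and `f'(0) < 0`, `f'(1) < 0` (equivalently `P'(0) < 1`, `P'(1) < 1`). -/
structure BistableSetting where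
  q : ℝ → ℝ
  P : Polynomial ℝ
  θ : ℝ
  hq_diff : ContDiff ℝ 1 q
  hq_supp : HasCompactSupport q
  hq_nonneg : ∀ x, 0 ≤ q x
  hq_int : ∫ x : ℝ, q x = 1
  hP0 : P.eval 0 = 0
  hP1 : P.eval 1 = 1
  hP_range : ∀ x ∈ Set.Ioo (0 : ℝ) 1, 0 < P.eval x ∧ P.eval x < 1
  hP_mono : ∀ x ∈ Set.Ioo (0 : ℝ) 1, 0 < (Polynomial.derivative P).eval x
  hθ_mem : θ ∈ Set.Ioo (0 : ℝ) 1
  hθ_zero : P.eval θ = θ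
  hθ_unique : ∀ x ∈ Set.Ioo (0 : ℝ) 1, P.eval x = x → x = θ
  hf'0 : (Polynomial.derivative P).eval 0 < 1
  hf'1 : (Polynomial.derivative P).eval 1 < 1

/-- The nonlinearity `g`, equal to the polynomial `P` on `[0,1]` and extended linearly:
`g(x) = x + f'(0)·x` for `x < 0` and `g(x) = x + f'(1)(x-1)` for `x > 1`. -/
noncomputable def BistableSetting.g (S : BistableSetting) (x : ℝ) : ℝ :=
  if x < 0 then (Polynomial.derivative S.P).eval 0 * x
  else if x ≤ 1 then S.P.eval x
  else 1 + (Polynomial.derivative S.P).eval 1 * (x - 1)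

/-- A traveling wave with speed `ℓ`: a nondecreasing `C¹` function `φ` with
`φ = g(q_ℓ * φ)`, `φ(-∞) = 0` and `φ(+∞) = 1`. -/
structure IsTravelingWave (S : BistableSetting) (ℓ : ℝ) (φ : ℝ → ℝ) : Prop where
  mono : Monotone φ
  smooth : ContDiff ℝ 1 φ
  wave_eq : ∀ x, φ x = S.g (conv (qshift S.q ℓ) φ x)
  limit_bot : Tendsto φ atBot (𝓝 0)
  limit_top : Tendsto φ atTop (𝓝 1)

lemma exists_left_pos (F : Polynomial ℝ) (t v : ℝ) (h0 : F.eval t = 0)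
    (hd : F.derivative.eval t < 0) (hv : v < t) :
    ∃ w, v < w ∧ w < t ∧ 0 < F.eval w := by
  have hda := F.hasDerivAt t
  have hs := hasDerivAt_iff_tendsto_slope.mp hda
  have hlt : ∀ᶠ y in 𝓝[≠] t, slope (fun x => F.eval x) t y < 0 :=
    hs.eventually_lt_const hd
  have hle : 𝓝[<] t ≤ 𝓝[≠] t := nhdsWithin_mono t (fun x hx => ne_of_lt hx)
  have h1 : ∀ᶠ y in 𝓝[<] t, slope (fun x => F.eval x) t y < 0 := hle hlt
  have h2 : Set.Ioo v t ∈ 𝓝[<] t := Ioo_mem_nhdsLT_of_mem ⟨hv, le_refl t⟩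
  obtain ⟨w, hw1, hw2⟩ := (h1.and (eventually_of_mem h2 (fun x hx => hx))).exists
  refine ⟨w, hw2.1, hw2.2, ?_⟩
  rw [slope_def_field] at hw1
  simp only [h0, sub_zero] at hw1
  rcases div_neg_iff.mp hw1 with ⟨h, _⟩ | ⟨_, h⟩
  · exact h
  · linarith [hw2.2]

lemma exists_right_neg (F : Polynomial ℝ) (t v : ℝ) (h0 : F.eval t = 0)
    (hd : F.derivative.eval t < 0) (hv : t < v) :
    ∃ w, t < w ∧ w < v ∧ F.eval w < 0 := by
  have hda := F.hasDerivAt t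
  have hs := hasDerivAt_iff_tendsto_slope.mp hda
  have hlt : ∀ᶠ y in 𝓝[≠] t, slope (fun x => F.eval x) t y < 0 :=
    hs.eventually_lt_const hd
  have hle : 𝓝[>] t ≤ 𝓝[≠] t := nhdsWithin_mono t (fun x hx => ne_of_gt hx)
  have h1 : ∀ᶠ y in 𝓝[>] t, slope (fun x => F.eval x) t y < 0 := hle hlt
  have h2 : Set.Ioo t v ∈ 𝓝[>] t := Ioo_mem_nhdsGT_of_mem ⟨le_refl t, hv⟩
  obtain ⟨w, hw1, hw2⟩ := (h1.and (eventually_of_mem h2 (fun x hx => hx))).exists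
  refine ⟨w, hw2.1, hw2.2, ?_⟩
  rw [slope_def_field] at hw1
  simp only [h0, sub_zero] at hw1
  rcases div_neg_iff.mp hw1 with ⟨_, h⟩ | ⟨h, _⟩
  · linarith [hw2.1]
  · exact h

/-- `P(v) > v` on `(θ, 1)`. -/
lemma BS_fpos (S : BistableSetting) (v : ℝ) (hv : v ∈ Set.Ioo S.θ 1) :
    v < S.P.eval v := by
  set F : Polynomial ℝ := S.P - Polynomial.X with hF
  have hFe : ∀ x, F.eval x = S.P.eval x - x := by
    intro x; simp [hF]
  have hF1 : F.eval 1 = 0 := by rw [hFe, S.hP1]; ring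
  have hFd : F.derivative.eval 1 < 0 := by
    simp only [hF, Polynomial.derivative_sub, Polynomial.derivative_X,
      Polynomial.eval_sub, Polynomial.eval_one]
    linarith [S.hf'1]
  by_contra hcon
  push_neg at hcon
  have hvne : S.P.eval v ≠ v := by
    intro heq
    have hv01 : v ∈ Set.Ioo (0:ℝ) 1 := ⟨lt_trans S.hθ_mem.1 hv.1, hv.2⟩
    have := S.hθ_unique v hv01 heq
    exact absurd (this ▸ hv.1) (lt_irrefl _)
  have hFv : F.eval v < 0 := by rw [hFe]; cases lt_or_eq_of_le hcon with
    | inl h => linarith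
    | inr h => exact absurd h hvne
  obtain ⟨w, hw1, hw2, hw3⟩ := exists_left_pos F 1 v hF1 hFd hv.2
  have hsub := intermediate_value_Ioo (le_of_lt hw1)
    (Polynomial.continuous F).continuousOn (a := v) (b := w)
  obtain ⟨ξ, hξmem, hξ0⟩ := hsub ⟨hFv, hw3⟩
  have hξ01 : ξ ∈ Set.Ioo (0:ℝ) 1 :=
    ⟨by linarith [S.hθ_mem.1, hv.1, hξmem.1], by linarith [hξmem.2]⟩
  have hξ0' : Polynomial.eval ξ F = 0 := hξ0
  have hPξ : S.P.eval ξ = ξ := by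
    have := hFe ξ; rw [hξ0'] at this; linarith
  have := S.hθ_unique ξ hξ01 hPξ
  linarith [hv.1, hξmem.1, this ▸ (lt_trans hv.1 hξmem.1)]

/-- `P(v) < v` on `(0, θ)`. -/
lemma BS_fneg (S : BistableSetting) (v : ℝ) (hv : v ∈ Set.Ioo 0 S.θ) :
    S.P.eval v < v := by
  set F : Polynomial ℝ := S.P - Polynomial.X with hF
  have hFe : ∀ x, F.eval x = S.P.eval x - x := by
    intro x; simp [hF]
  have hF0 : F.eval 0 = 0 := by rw [hFe, S.hP0]; ring
  have hFd : F.derivative.eval 0 < 0 := by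
    simp only [hF, Polynomial.derivative_sub, Polynomial.derivative_X,
      Polynomial.eval_sub, Polynomial.eval_one]
    linarith [S.hf'0]
  by_contra hcon
  push_neg at hcon
  have hvne : S.P.eval v ≠ v := by
    intro heq
    have hv01 : v ∈ Set.Ioo (0:ℝ) 1 := ⟨hv.1, lt_trans hv.2 S.hθ_mem.2⟩
    have := S.hθ_unique v hv01 heq
    exact absurd (this ▸ hv.2) (lt_irrefl _)
  have hFv : 0 < F.eval v := by rw [hFe]; cases lt_or_eq_of_le hcon with
    | inl h => linarith
    | inr h => exact absurd h.symm hvne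
  obtain ⟨w, hw1, hw2, hw3⟩ := exists_right_neg F 0 v hF0 hFd hv.1
  have hsub := intermediate_value_Ioo (le_of_lt hw2)
    (Polynomial.continuous F).continuousOn (a := w) (b := v)
  obtain ⟨ξ, hξmem, hξ0⟩ := hsub ⟨hw3, hFv⟩
  have hξ01 : ξ ∈ Set.Ioo (0:ℝ) 1 :=
    ⟨by linarith [hξmem.1], by linarith [hξmem.2, hv.2, S.hθ_mem.2]⟩
  have hξ0' : Polynomial.eval ξ F = 0 := hξ0
  have hPξ : S.P.eval ξ = ξ := by
    have := hFe ξ; rw [hξ0'] at this; linarith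
  have := S.hθ_unique ξ hξ01 hPξ
  linarith [hξmem.2, hv.2, this ▸ hξmem.2]

/-- The speed of any traveling wave lies strictly between the infimum and the supremum
of the support of the step density `q`. -/
theorem traveling_wave_speed_in_support (S : BistableSetting) (ℓ : ℝ) (φ : ℝ → ℝ)
    (h : IsTravelingWave S ℓ φ) :
    ℓ ∈ Set.Ioo (sInf (tsupport S.q)) (sSup (tsupport S.q)) := by
  have qc : Continuous S.q := S.hq_diff.continuous
  have φc : Continuous φ := h.smooth.continuous
  -- bounds on φ
  have φ0 : ∀ x, 0 ≤ φ x := h.mono.le_of_tendsto h.limit_bot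
  have φ1 : ∀ x, φ x ≤ 1 := h.mono.ge_of_tendsto h.limit_top
  -- the shifted kernel
  set A : ℝ → ℝ := fun y => S.q (y + ℓ) with hA
  have contA : Continuous A := qc.comp (continuous_id.add continuous_const)
  have hcsA : HasCompactSupport A := by
    have := S.hq_supp.comp_homeomorph (Homeomorph.addRight ℓ)
    exact this
  have hintA : Integrable A := contA.integrable_of_hasCompactSupport hcsA
  have hAint : ∫ y, A y = 1 := by
    rw [hA]
    simpa using (MeasureTheory.integral_add_right_eq_self S.q ℓ).trans S.hq_int
  have hAnn : ∀ y, 0 ≤ A y := fun y => S.hq_nonneg _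
  -- integrability of the convolution integrand
  have hint2 : ∀ x, Integrable (fun y => A y * φ (x - y)) := by
    intro x
    exact (contA.mul (φc.comp (continuous_const.sub continuous_id))).integrable_of_hasCompactSupport
      (hcsA.mul_right)
  -- conv rewritten
  have hconv : ∀ x, conv (qshift S.q ℓ) φ x = ∫ y, A y * φ (x - y) := by
    intro x; rfl
  -- conv is in [0,1]
  have hc0 : ∀ x, 0 ≤ conv (qshift S.q ℓ) φ x := by
    intro x
    rw [hconv]
    exact integral_nonneg fun y => mul_nonneg (hAnn y) (φ0 _)
  have hc1 : ∀ x, conv (qshift S.q ℓ) φ x ≤ 1 := by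
    intro x
    rw [hconv]
    calc ∫ y, A y * φ (x - y) ≤ ∫ y, A y := by
          apply integral_mono (hint2 x) hintA
          intro y
          have := mul_le_of_le_one_right (hAnn y) (φ1 (x - y))
          simpa using this
      _ = 1 := hAint
  -- φ x = P (conv x)
  have hwave : ∀ x, φ x = S.P.eval (conv (qshift S.q ℓ) φ x) := by
    intro x
    rw [h.wave_eq x]
    unfold BistableSetting.g
    rw [if_neg (not_lt.mpr (hc0 x)), if_pos (hc1 x)]
  -- strict monotonicity of P on [0,1]
  have hPmono : StrictMonoOn (fun x => S.P.eval x) (Set.Icc (0:ℝ) 1) := by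
    apply strictMonoOn_of_deriv_pos (convex_Icc 0 1) (Polynomial.continuous S.P).continuousOn
    intro x hx
    rw [interior_Icc] at hx
    rw [Polynomial.deriv]
    exact S.hP_mono x hx
  -- IVT: φ attains any value in (0,1)
  have hIVT : ∀ v ∈ Set.Ioo (0:ℝ) 1, ∃ x₀, φ x₀ = v := by
    intro v hv
    obtain ⟨a, ha⟩ := (h.limit_bot.eventually_lt_const hv.1).exists
    obtain ⟨b, hb⟩ := (h.limit_top.eventually_const_lt hv.2).exists
    have hab : a ≤ b := by
      by_contra hcon
      push_neg at hcon
      have := h.mono hcon.le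
      linarith
    obtain ⟨x₀, _, hx₀⟩ := intermediate_value_Icc hab φc.continuousOn ⟨ha.le, hb.le⟩
    exact ⟨x₀, hx₀⟩
  have hθ := S.hθ_mem
  constructor
  · -- lower bound: ℓ > sInf (tsupport q)
    by_contra hcon
    push_neg at hcon
    -- conv ≤ φ
    have hkey : ∀ x, conv (qshift S.q ℓ) φ x ≤ φ x := by
      intro x
      rw [hconv]
      calc ∫ y, A y * φ (x - y) ≤ ∫ y, A y * φ x := by
            apply integral_mono (hint2 x) (hintA.mul_const _)
            intro y
            rcases eq_or_ne (A y) 0 with h0 | h0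
            · simp [h0]
            · have hmem : y + ℓ ∈ tsupport S.q := subset_tsupport _ h0
              have : sInf (tsupport S.q) ≤ y + ℓ :=
                csInf_le S.hq_supp.isCompact.bddBelow hmem
              have hy : 0 ≤ y := by linarith
              exact mul_le_mul_of_nonneg_left (h.mono (by linarith)) (hAnn y)
        _ = φ x := by rw [integral_mul_const, hAint, one_mul]
    obtain ⟨x₀, hx₀⟩ := hIVT (S.θ / 2) ⟨by linarith [hθ.1], by linarith [hθ.1, hθ.2]⟩
    have hle : conv (qshift S.q ℓ) φ x₀ ≤ S.θ / 2 := hx₀ ▸ hkey x₀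
    have hPle : S.P.eval (conv (qshift S.q ℓ) φ x₀) ≤ S.P.eval (S.θ / 2) :=
      hPmono.monotoneOn ⟨hc0 x₀, hc1 x₀⟩
        ⟨by linarith [hθ.1], by linarith [hθ.1, hθ.2]⟩ hle
    have hfneg := BS_fneg S (S.θ / 2) ⟨by linarith [hθ.1], by linarith [hθ.1]⟩
    have := hwave x₀
    rw [hx₀] at this
    linarith
  · -- upper bound: ℓ < sSup (tsupport q)
    by_contra hcon
    push_neg at hcon
    have hkey : ∀ x, φ x ≤ conv (qshift S.q ℓ) φ x := by
      intro x
      rw [hconv]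
      calc φ x = ∫ y, A y * φ x := by rw [integral_mul_const, hAint, one_mul]
        _ ≤ ∫ y, A y * φ (x - y) := by
            apply integral_mono (hintA.mul_const _) (hint2 x)
            intro y
            rcases eq_or_ne (A y) 0 with h0 | h0
            · simp [h0]
            · have hmem : y + ℓ ∈ tsupport S.q := subset_tsupport _ h0
              have : y + ℓ ≤ sSup (tsupport S.q) :=
                le_csSup S.hq_supp.isCompact.bddAbove hmem
              have hy : y ≤ 0 := by linarith
              exact mul_le_mul_of_nonneg_left (h.mono (by linarith)) (hAnn y)
    obtain ⟨x₀, hx₀⟩ :=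
      hIVT ((S.θ + 1) / 2) ⟨by linarith [hθ.1, hθ.2], by linarith [hθ.2]⟩
    have hle : (S.θ + 1) / 2 ≤ conv (qshift S.q ℓ) φ x₀ := hx₀ ▸ hkey x₀
    have hPle : S.P.eval ((S.θ + 1) / 2) ≤ S.P.eval (conv (qshift S.q ℓ) φ x₀) :=
      hPmono.monotoneOn ⟨by linarith [hθ.1], by linarith [hθ.2]⟩
        ⟨hc0 x₀, hc1 x₀⟩ hle
    have hfpos := BS_fpos S ((S.θ + 1) / 2) ⟨by linarith [hθ.2], by linarith [hθ.2]⟩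
    have := hwave x₀
    rw [hx₀] at this
    linarith
end

section
/- If φ is a traveling wave with speed ℓ, then 0 < φ(x) < 1 and φ'(x) > 0 for all x ∈ ℝ. -/
open MeasureTheory Filter Topology

/-!
Write `u = q_ℓ * φ`, so that `φ = g(u)` with `u ∈ [0,1]`. If `φ` vanished somewhere, at its last
zero `a` we would have `u(a) = 0`, so `φ = 0` on `a - supp q_ℓ`; maximality of `a` puts `supp q_ℓ`
in `[0, ∞)`, and then `u ≤ φ` by monotonicity. Just right of `a`, where `0 < φ < θ`, this
contradicts `g(u) < u`. The bound `φ < 1` is the same argument applied to the wave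
`x ↦ 1 - φ(-x)` for the kernel `q_ℓ(-·)` and the nonlinearity `t ↦ 1 - g(1 - t)`.

Finally `φ' = g'(u) · (q_ℓ * φ')` with `g'(u) > 0` and `φ' ≥ 0`, so a zero of `φ'` at `x` gives
zeros on `x - supp q_ℓ`. Iterating over an interval of `supp q_ℓ` avoiding `0` spreads the zero to
a half-line, where `φ` would then be constant, against its limits at `±∞` and `0 < φ < 1`.
-/

open Set

structure IsDispersalKernel (k : ℝ → ℝ) : Prop where
  continuous : Continuous k
  hasCompactSupport : HasCompactSupport k
  nonneg : ∀ x, 0 ≤ k x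
  integral_eq_one : ∫ x, k x = 1

theorem HasCompactSupport.integrable_mul_comp_sub {k f : ℝ → ℝ} (hks : HasCompactSupport k)
    (hk : Continuous k) (hf : Continuous f) (x : ℝ) :
    Integrable (fun y => k y * f (x - y)) :=
  (hk.mul (hf.comp (continuous_const.sub continuous_id))).integrable_of_hasCompactSupport
    hks.mul_right

theorem HasCompactSupport.hasDerivAt_conv {k φ : ℝ → ℝ} (hks : HasCompactSupport k)
    (hk : Continuous k) (hφ : ContDiff ℝ 1 φ) (x₀ : ℝ) :
    HasDerivAt (conv k φ) (conv k (deriv φ) x₀) x₀ := by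
  have hφ' : Continuous (deriv φ) := hφ.continuous_deriv le_rfl
  obtain ⟨C, hC⟩ := (((isCompact_closedBall x₀ 1).prod hks.isCompact).image
    continuous_sub).exists_bound_of_continuousOn hφ'.continuousOn
  have hbound : ∀ y, ∀ x ∈ Metric.ball x₀ 1, ‖k y * deriv φ (x - y)‖ ≤ ‖k y‖ * C := by
    intro y x hx
    by_cases hy : y ∈ tsupport k
    · rw [norm_mul]
      exact mul_le_mul_of_nonneg_left
        (hC _ ⟨(x, y), ⟨Metric.ball_subset_closedBall hx, hy⟩, rfl⟩) (norm_nonneg _)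
    · simp [image_eq_zero_of_notMem_tsupport hy]
  have hderiv : ∀ y, ∀ x ∈ Metric.ball x₀ 1,
      HasDerivAt (fun x => k y * φ (x - y)) (k y * deriv φ (x - y)) x := fun y x _ => by
    simpa using
      ((hφ.differentiable one_ne_zero (x - y)).hasDerivAt.comp_sub_const x y).const_mul (k y)
  exact (hasDerivAt_integral_of_dominated_loc_of_deriv_le (Metric.ball_mem_nhds x₀ one_pos)
    (Eventually.of_forall fun x =>
      (hks.integrable_mul_comp_sub hk hφ.continuous x).aestronglyMeasurable)
    (hks.integrable_mul_comp_sub hk hφ.continuous x₀)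
    (hks.integrable_mul_comp_sub hk hφ' x₀).aestronglyMeasurable
    (ae_of_all _ hbound) ((hk.integrable_of_hasCompactSupport hks).norm.mul_const C)
    (ae_of_all _ hderiv)).2

namespace IsDispersalKernel

variable {k φ : ℝ → ℝ}

theorem integrable (hk : IsDispersalKernel k) : Integrable k :=
  hk.continuous.integrable_of_hasCompactSupport hk.hasCompactSupport

theorem support_nonempty (hk : IsDispersalKernel k) : (Function.support k).Nonempty :=
  Function.support_nonempty_iff.2 fun h => by simpa [h] using hk.integral_eq_one

theorem conv_le (hk : IsDispersalKernel k) (hφ : Continuous φ) {x c : ℝ}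
    (h : ∀ y, k y ≠ 0 → φ (x - y) ≤ c) : conv k φ x ≤ c :=
  calc conv k φ x ≤ ∫ y, k y * c :=
        integral_mono (hk.hasCompactSupport.integrable_mul_comp_sub hk.continuous hφ x)
          (hk.integrable.mul_const c) fun y => by
          by_cases hy : k y = 0
          · simp [hy]
          · exact mul_le_mul_of_nonneg_left (h y hy) (hk.nonneg y)
    _ = c := by rw [integral_mul_const, hk.integral_eq_one, one_mul]

theorem le_conv (hk : IsDispersalKernel k) (hφ : Continuous φ) {x c : ℝ}
    (h : ∀ y, k y ≠ 0 → c ≤ φ (x - y)) : c ≤ conv k φ x :=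
  calc c = ∫ y, k y * c := by rw [integral_mul_const, hk.integral_eq_one, one_mul]
    _ ≤ conv k φ x :=
        integral_mono (hk.integrable.mul_const c)
          (hk.hasCompactSupport.integrable_mul_comp_sub hk.continuous hφ x) fun y => by
          by_cases hy : k y = 0
          · simp [hy]
          · exact mul_le_mul_of_nonneg_left (h y hy) (hk.nonneg y)

theorem conv_mem_Icc (hk : IsDispersalKernel k) (hφ : Continuous φ)
    (h01 : ∀ x, φ x ∈ Icc 0 1) (x : ℝ) : conv k φ x ∈ Icc 0 1 :=
  ⟨hk.le_conv hφ fun _ _ => (h01 _).1, hk.conv_le hφ fun _ _ => (h01 _).2⟩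

theorem eq_zero_of_conv_eq_zero (hk : IsDispersalKernel k) (hφ : Continuous φ)
    (hφ0 : ∀ x, 0 ≤ φ x) {x : ℝ} (hx : conv k φ x = 0) {y : ℝ} (hy : k y ≠ 0) :
    φ (x - y) = 0 := by
  have hint := hk.hasCompactSupport.integrable_mul_comp_sub hk.continuous hφ x
  have hae :=
    (integral_eq_zero_iff_of_nonneg (fun y => mul_nonneg (hk.nonneg y) (hφ0 _)) hint).1 hx
  have hzero := ((hk.continuous.mul (hφ.comp (continuous_const.sub continuous_id))).ae_eq_iff_eq
    volume continuous_const).1 hae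
  exact (mul_eq_zero.1 (congrFun hzero y)).resolve_left hy

theorem comp_neg (hk : IsDispersalKernel k) :
    IsDispersalKernel (fun y => k (-y)) where
  continuous := hk.continuous.comp continuous_neg
  hasCompactSupport := hk.hasCompactSupport.comp_homeomorph (Homeomorph.neg ℝ)
  nonneg y := hk.nonneg (-y)
  integral_eq_one := by rw [integral_neg_eq_self k volume, hk.integral_eq_one]

theorem conv_comp_neg (hk : IsDispersalKernel k) (hφ : Continuous φ) (x : ℝ) :
    conv (fun y => k (-y)) (fun x => 1 - φ (-x)) x = 1 - conv k φ (-x) := by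
  calc conv (fun y => k (-y)) (fun x => 1 - φ (-x)) x = ∫ y, k y * (1 - φ (-x - y)) := by
        rw [conv, ← integral_neg_eq_self]
        simp only [neg_neg, sub_neg_eq_add, neg_add]
        rfl
    _ = (∫ y, k y) - ∫ y, k y * φ (-x - y) := by
        rw [← integral_sub hk.integrable
          (hk.hasCompactSupport.integrable_mul_comp_sub hk.continuous hφ (-x))]
        simp only [mul_sub, mul_one]
    _ = 1 - conv k φ (-x) := by rw [hk.integral_eq_one, conv]

end IsDispersalKernel

theorem exists_Ici_subset_of_forall_add_mem {A : Set ℝ} {c d : ℝ} (hc : 0 ≤ c) (hcd : c < d)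
    (hA : ∀ x ∈ A, ∀ y ∈ Ioo c d, x + y ∈ A) {x₀ : ℝ} (hx₀ : x₀ ∈ A) :
    ∃ X, Ici X ⊆ A := by
  have hd : 0 < d := hc.trans_lt hcd
  have hsum : ∀ n : ℕ, ∀ w ∈ Ioo ((n + 1) * c) ((n + 1) * d), x₀ + w ∈ A := by
    intro n
    induction n with
    | zero => intro w hw; exact hA x₀ hx₀ w (by simpa using hw)
    | succ n ih =>
      rintro w ⟨hw₁, hw₂⟩
      push_cast at hw₁ hw₂
      have hm : (0 : ℝ) < n + 2 := by positivity
      set v := w / (n + 2) with hv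
      have hwv : w = (n + 2) * v := by rw [hv]; field_simp
      have hvI : v ∈ Ioo c d := ⟨by nlinarith, by nlinarith⟩
      have hrest : w - v ∈ Ioo ((n + 1) * c) ((n + 1) * d) := ⟨by nlinarith, by nlinarith⟩
      simpa [add_assoc] using hA _ (ih _ hrest) v hvI
  -- for `w = z - x₀ > c d / (d - c)` the window `(w / d, w / c)` is longer than 1, so it
  -- contains `⌊w / d⌋₊ + 1`
  refine ⟨x₀ + c * d / (d - c) + 1, fun z hz => ?_⟩
  have hdc : 0 < d - c := sub_pos.2 hcd
  have hw : c * d / (d - c) + 1 ≤ z - x₀ := by rw [mem_Ici] at hz; linarith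
  have hcd' : c * d < (z - x₀) * (d - c) := by
    have := (div_lt_iff₀ hdc).1 (show c * d / (d - c) < z - x₀ by linarith); linarith
  set n := ⌊(z - x₀) / d⌋₊
  have hn₁ : (n : ℝ) * d ≤ z - x₀ :=
    (le_div_iff₀ hd).1 (Nat.floor_le (div_nonneg (by nlinarith) hd.le))
  have hn₂ : z - x₀ < (n + 1) * d := (div_lt_iff₀ hd).1 (Nat.lt_floor_add_one _)
  have hn₃ : (n + 1) * c < z - x₀ := by nlinarith
  simpa using hsum n (z - x₀) ⟨hn₃, hn₂⟩

theorem exists_Iic_subset_or_exists_Ici_subset {A U : Set ℝ} (hU : IsOpen U) (hUne : U.Nonempty)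
    (hA : ∀ x ∈ A, ∀ y ∈ U, x - y ∈ A) (hAne : A.Nonempty) :
    (∃ X, Iic X ⊆ A) ∨ ∃ X, Ici X ⊆ A := by
  obtain ⟨y₀, hy₀⟩ := hUne
  obtain ⟨l, r, hlr, hsub⟩ := mem_nhds_iff_exists_Ioo_subset.1 (hU.mem_nhds hy₀)
  obtain ⟨x₀, hx₀⟩ := hAne
  rcases le_or_gt r 0 with hr | hr
  · refine .inr (exists_Ici_subset_of_forall_add_mem (c := -r) (d := -l) (by linarith)
      (by linarith [hlr.1, hlr.2]) (fun x hx y hy => ?_) hx₀)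
    simpa using hA x hx (-y) (hsub ⟨by linarith [hy.2], by linarith [hy.1]⟩)
  · have hneg : ∀ x ∈ -A, ∀ y ∈ Ioo (max l 0) r, x + y ∈ -A := fun x hx y hy => by
      rw [Set.mem_neg, neg_add, ← sub_eq_add_neg]
      exact hA (-x) hx y (hsub ⟨(le_max_left l 0).trans_lt hy.1, hy.2⟩)
    obtain ⟨X, hX⟩ := exists_Ici_subset_of_forall_add_mem (le_max_right l 0)
      (max_lt (hlr.1.trans hlr.2) hr) hneg (neg_mem_neg.2 hx₀)
    exact .inl ⟨-X, fun z hz => by simpa using hX (show X ≤ -z by linarith [mem_Iic.1 hz])⟩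

theorem eq_of_tendsto_atTop_of_deriv_eq_zero {φ : ℝ → ℝ} {X L : ℝ} (hφ : Differentiable ℝ φ)
    (h0 : Ici X ⊆ {x | deriv φ x = 0}) (hL : Tendsto φ atTop (𝓝 L)) {z : ℝ} (hz : X < z) :
    φ z = L := by
  obtain ⟨c, hc⟩ := isOpen_Ioi.exists_is_const_of_deriv_eq_zero isPreconnected_Ioi
    hφ.differentiableOn fun x hx => h0 (mem_Ici.2 (le_of_lt hx))
  have hc' : Tendsto φ atTop (𝓝 c) :=
    tendsto_const_nhds.congr' ((eventually_gt_atTop X).mono fun x hx => (hc x hx).symm)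
  rw [hc z hz, tendsto_nhds_unique hc' hL]

theorem eq_of_tendsto_atBot_of_deriv_eq_zero {φ : ℝ → ℝ} {X L : ℝ} (hφ : Differentiable ℝ φ)
    (h0 : Iic X ⊆ {x | deriv φ x = 0}) (hL : Tendsto φ atBot (𝓝 L)) {z : ℝ} (hz : z < X) :
    φ z = L := by
  obtain ⟨c, hc⟩ := isOpen_Iio.exists_is_const_of_deriv_eq_zero isPreconnected_Iio
    hφ.differentiableOn fun x hx => h0 (mem_Iic.2 (le_of_lt hx))
  have hc' : Tendsto φ atBot (𝓝 c) :=
    tendsto_const_nhds.congr' ((eventually_lt_atBot X).mono fun x hx => (hc x hx).symm)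
  rw [hc z hz, tendsto_nhds_unique hc' hL]

theorem lt_self_of_forall_ne_self {p : ℝ → ℝ} {p' θ t : ℝ} (hp : Continuous p) (hp0 : p 0 = 0)
    (hd : HasDerivAt p p' 0) (hp' : p' < 1) (hfix : ∀ s ∈ Ioo 0 θ, p s ≠ s) (ht : t ∈ Ioo 0 θ) :
    p t < t := by
  have hslope : ∀ᶠ s in 𝓝[>] 0, s⁻¹ * (p s - s) < 0 := by
    have := ((hd.sub (hasDerivAt_id 0)).tendsto_slope_zero_right).eventually
      (gt_mem_nhds (sub_neg.2 hp'))
    simpa [hp0] using this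
  obtain ⟨s, hs, hsθ⟩ := (hslope.and (Ioo_mem_nhdsGT (ht.1.trans ht.2))).exists
  have hps : p s - s < 0 := by
    by_contra! h
    exact hs.not_ge (mul_nonneg (inv_nonneg.2 hsθ.1.le) h)
  by_contra! hge
  obtain ⟨z, hz, hz0⟩ := isPreconnected_Ioo.intermediate_value (f := fun x => p x - x) hsθ ht
    (hp.sub continuous_id).continuousOn ⟨hps.le, sub_nonneg.2 hge⟩
  exact hfix z hz (sub_eq_zero.1 hz0)

namespace BistableSetting

variable (S : BistableSetting)

theorem g_eq_eval {t : ℝ} (ht : t ∈ Icc 0 1) : S.g t = S.P.eval t := by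
  simp [g, not_lt.2 ht.1, ht.2]

theorem g_zero : S.g 0 = 0 := by rw [S.g_eq_eval ⟨le_rfl, zero_le_one⟩, S.hP0]

theorem g_one : S.g 1 = 1 := by rw [S.g_eq_eval ⟨zero_le_one, le_rfl⟩, S.hP1]

theorem g_pos {t : ℝ} (ht : t ∈ Ioc 0 1) : 0 < S.g t := by
  rcases ht.2.lt_or_eq with h | rfl
  · rw [S.g_eq_eval (Ioc_subset_Icc_self ht)]
    exact (S.hP_range t ⟨ht.1, h⟩).1
  · rw [g_one]; exact one_pos

theorem g_lt_one {t : ℝ} (ht : t ∈ Ico 0 1) : S.g t < 1 := by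
  rcases ht.1.eq_or_lt with rfl | h
  · rw [g_zero]; exact one_pos
  · rw [S.g_eq_eval (Ico_subset_Icc_self ht)]
    exact (S.hP_range t ⟨h, ht.2⟩).2

theorem g_lt_self {t : ℝ} (ht : t ∈ Ioo 0 S.θ) : S.g t < t := by
  have hθ := S.hθ_mem
  rw [S.g_eq_eval ⟨ht.1.le, (ht.2.trans hθ.2).le⟩]
  exact lt_self_of_forall_ne_self S.P.continuous S.hP0 (S.P.hasDerivAt 0) S.hf'0
    (fun s hs hfix => hs.2.ne (S.hθ_unique s ⟨hs.1, hs.2.trans hθ.2⟩ hfix)) ht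

theorem lt_g_self {t : ℝ} (ht : t ∈ Ioo S.θ 1) : t < S.g t := by
  have hθ := S.hθ_mem
  rw [S.g_eq_eval ⟨(hθ.1.trans ht.1).le, ht.2.le⟩]
  have hd : HasDerivAt (fun s => 1 - S.P.eval (1 - s)) ((Polynomial.derivative S.P).eval 1) 0 := by
    simpa using ((S.P.hasDerivAt (1 - 0)).comp 0 ((hasDerivAt_id 0).const_sub 1)).const_sub 1
  have := lt_self_of_forall_ne_self (p := fun s => 1 - S.P.eval (1 - s))
    (continuous_const.sub (S.P.continuous.comp (continuous_const.sub continuous_id)))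
    (by simp [S.hP1]) hd S.hf'1
    (fun s hs hfix => by
      have := S.hθ_unique (1 - s) ⟨by linarith [hs.2, hθ.1], by linarith [hs.1]⟩ (by linarith)
      linarith [hs.2])
    (show 1 - t ∈ Ioo 0 (1 - S.θ) from ⟨by linarith [ht.2], by linarith [ht.1]⟩)
  simp only [sub_sub_cancel] at this
  linarith

theorem isDispersalKernel_qshift (ℓ : ℝ) : IsDispersalKernel (qshift S.q ℓ) where
  continuous := S.hq_diff.continuous.comp (continuous_add_const ℓ)
  hasCompactSupport := S.hq_supp.comp_homeomorph (Homeomorph.addRight ℓ)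
  nonneg x := S.hq_nonneg (x + ℓ)
  integral_eq_one := (integral_add_right_eq_self S.q ℓ).trans S.hq_int

end BistableSetting

theorem pos_of_eq_comp_conv {k φ p : ℝ → ℝ} {θ : ℝ} (hk : IsDispersalKernel k)
    (hmono : Monotone φ) (hφ : Continuous φ) (h01 : ∀ x, φ x ∈ Icc 0 1) (hne : ∃ x, φ x ≠ 0)
    (hwave : ∀ x, φ x = p (conv k φ x)) (hp0 : p 0 = 0) (hp_ne : ∀ t ∈ Ioc 0 1, p t ≠ 0)
    (hθ : 0 < θ) (hpθ : ∀ t ∈ Ioo 0 θ, p t < t) (x : ℝ) : 0 < φ x := by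
  by_contra! hx
  set Z := {x | φ x = 0}
  obtain ⟨x₁, hx₁⟩ := hne
  have hZbdd : BddAbove Z :=
    ⟨x₁, fun z hz => le_of_not_gt fun h => hx₁ (le_antisymm (hz ▸ hmono h.le) (h01 x₁).1)⟩
  set a := sSup Z
  have ha : φ a = 0 :=
    (isClosed_eq hφ continuous_const).csSup_mem ⟨x, le_antisymm hx (h01 x).1⟩ hZbdd
  have hu01 := hk.conv_mem_Icc hφ h01
  have hua : conv k φ a = 0 := by
    by_contra h
    exact hp_ne _ ⟨(hu01 a).1.lt_of_ne (Ne.symm h), (hu01 a).2⟩ ((hwave a).symm.trans ha)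
  -- `φ` vanishes on `a - supp k`, so by maximality of `a` the kernel lives on `[0, ∞)`
  have hsupp_nonneg : ∀ y, k y ≠ 0 → 0 ≤ y := fun y hy => by
    have := le_csSup hZbdd (hk.eq_zero_of_conv_eq_zero hφ (fun x => (h01 x).1) hua hy)
    linarith
  have hle : ∀ x, conv k φ x ≤ φ x := fun x =>
    hk.conv_le hφ fun y hy => hmono (by linarith [hsupp_nonneg y hy])
  have hright : ∀ᶠ x in 𝓝[>] a, φ x < θ ∧ a < x :=
    (eventually_nhdsWithin_of_eventually_nhds ((hφ.tendsto a).eventually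
      (gt_mem_nhds (ha ▸ hθ)))).and self_mem_nhdsWithin
  obtain ⟨x, hxθ, hax⟩ := hright.exists
  have hφx : 0 < φ x :=
    (h01 x).1.lt_of_ne fun h => hax.not_ge (le_csSup hZbdd h.symm)
  rcases (hu01 x).1.eq_or_lt with hu | hu
  · rw [hwave x, ← hu, hp0] at hφx
    exact hφx.false
  · have := hpθ _ ⟨hu, (hle x).trans_lt hxθ⟩
    linarith [hle x, hwave x]

theorem deriv_pos_of_eq_comp_conv {k φ p : ℝ → ℝ} (hk : IsDispersalKernel k)
    (hφ : ContDiff ℝ 1 φ) (hmono : Monotone φ) (hbot : Tendsto φ atBot (𝓝 0))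
    (htop : Tendsto φ atTop (𝓝 1)) (h01 : ∀ x, φ x ∈ Ioo 0 1)
    (hwave : ∀ x, φ x = p (conv k φ x)) (hp : ∀ x, DifferentiableAt ℝ p (conv k φ x))
    (hp' : ∀ x, deriv p (conv k φ x) ≠ 0) (x : ℝ) : 0 < deriv φ x := by
  have hd : Differentiable ℝ φ := hφ.differentiable one_ne_zero
  have hchain : ∀ x, deriv φ x = deriv p (conv k φ x) * conv k (deriv φ) x := fun x =>
    (((hp x).hasDerivAt.comp x (hk.hasCompactSupport.hasDerivAt_conv hk.continuous hφ x))
      |>.congr_of_eventuallyEq (Eventually.of_forall hwave)).deriv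
  have hA : ∀ x ∈ {x | deriv φ x = 0}, ∀ y ∈ Function.support k, x - y ∈ {x | deriv φ x = 0} :=
    fun x hx y hy => hk.eq_zero_of_conv_eq_zero (hφ.continuous_deriv le_rfl)
      (fun _ => hmono.deriv_nonneg)
      ((mul_eq_zero.1 ((hchain x).symm.trans hx)).resolve_left (hp' x)) hy
  refine hmono.deriv_nonneg.lt_of_ne fun hx => ?_
  rcases exists_Iic_subset_or_exists_Ici_subset hk.continuous.isOpen_support
      hk.support_nonempty hA ⟨x, hx.symm⟩ with ⟨X, hX⟩ | ⟨X, hX⟩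
  · exact (h01 (X - 1)).1.ne' (eq_of_tendsto_atBot_of_deriv_eq_zero hd hX hbot (by linarith))
  · exact (h01 (X + 1)).2.ne (eq_of_tendsto_atTop_of_deriv_eq_zero hd hX htop (by linarith))

namespace IsTravelingWave

variable {S : BistableSetting} {ℓ : ℝ} {φ : ℝ → ℝ}

theorem mem_Icc (h : IsTravelingWave S ℓ φ) (x : ℝ) : φ x ∈ Icc 0 1 :=
  ⟨h.mono.le_of_tendsto h.limit_bot x, h.mono.ge_of_tendsto h.limit_top x⟩

theorem pos (h : IsTravelingWave S ℓ φ) (x : ℝ) : 0 < φ x :=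
  pos_of_eq_comp_conv (S.isDispersalKernel_qshift ℓ) h.mono h.smooth.continuous h.mem_Icc
    (h.limit_top.eventually_ne one_ne_zero).exists h.wave_eq S.g_zero
    (fun _ ht => (S.g_pos ht).ne') S.hθ_mem.1 (fun _ ht => S.g_lt_self ht) x

theorem lt_one (h : IsTravelingWave S ℓ φ) (x : ℝ) : φ x < 1 := by
  have hk := S.isDispersalKernel_qshift ℓ
  have hφ := h.smooth.continuous
  obtain ⟨x₀, hx₀⟩ := (h.limit_bot.eventually_ne zero_ne_one).exists
  have := pos_of_eq_comp_conv (p := fun t => 1 - S.g (1 - t)) (θ := 1 - S.θ) hk.comp_neg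
    (fun a b hab => sub_le_sub_left (h.mono (neg_le_neg hab)) 1)
    (continuous_const.sub (hφ.comp continuous_neg))
    (fun x => ⟨sub_nonneg.2 (h.mem_Icc _).2, sub_le_self _ (h.mem_Icc _).1⟩)
    ⟨-x₀, by simpa [sub_eq_zero] using hx₀.symm⟩
    (fun x => by simp only [hk.conv_comp_neg hφ x, sub_sub_cancel, ← h.wave_eq])
    (by simp [S.g_one])
    (fun t ht => sub_ne_zero.2 (S.g_lt_one ⟨by linarith [ht.2], by linarith [ht.1]⟩).ne')
    (sub_pos.2 S.hθ_mem.2)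
    (fun t ht => by linarith [S.lt_g_self (t := 1 - t) ⟨by linarith [ht.2], by linarith [ht.1]⟩])
    (-x)
  simpa using this

theorem deriv_pos (h : IsTravelingWave S ℓ φ) (x : ℝ) : 0 < deriv φ x := by
  have hk := S.isDispersalKernel_qshift ℓ
  have hu : ∀ x, conv (qshift S.q ℓ) φ x ∈ Ioo 0 1 := fun x => by
    obtain ⟨hu0, hu1⟩ := hk.conv_mem_Icc h.smooth.continuous h.mem_Icc x
    refine ⟨hu0.lt_of_ne fun h0 => (h.pos x).ne' ?_, hu1.lt_of_ne fun h1 => (h.lt_one x).ne ?_⟩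
    · rw [h.wave_eq x, ← h0, S.g_zero]
    · rw [h.wave_eq x, h1, S.g_one]
  refine deriv_pos_of_eq_comp_conv hk h.smooth h.mono h.limit_bot h.limit_top
    (fun x => ⟨h.pos x, h.lt_one x⟩) (p := fun t => S.P.eval t)
    (fun x => (h.wave_eq x).trans (S.g_eq_eval (Ioo_subset_Icc_self (hu x))))
    (fun _ => S.P.differentiableAt) (fun x => ?_) x
  rw [Polynomial.deriv]
  exact (S.hP_mono _ (hu x)).ne'

end IsTravelingWave

/-- A traveling wave profile takes values strictly in `(0,1)` and is strictly increasing,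
with an everywhere positive derivative. -/
theorem traveling_wave_strictly_increasing (S : BistableSetting) (ℓ : ℝ) (φ : ℝ → ℝ)
    (h : IsTravelingWave S ℓ φ) :
    ∀ x : ℝ, (0 < φ x ∧ φ x < 1) ∧ 0 < deriv φ x :=
  fun x => ⟨⟨h.pos x, h.lt_one x⟩, h.deriv_pos x⟩
end
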